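/- arXiv:2307.05199 — 6 statements merged into one kernel-verified Lean document; each statement's English description precedes it below -/
import Mathlib

section
/- For the extended loss ℓ̄ with rejection cost ε₁ on ID samples, cost ε₂ for predicting on OOD samples, and cost ε₃ for rejecting OOD samples (with ε₂ > ε₃), and for any input x with p_I(x) > 0, the partial risk of rejecting at x is at most the minimal partial risk of predicting any label at x if and only if r_B(x) + (ε₂−ε₃)·(π/(1−π))·(p_O(x)/p_I(x)) ≥ ε₁, where r_B(x) = min over ŷ∈Y of Σ_{y∈Y} p_I(y|x)·ℓ(y,ŷ). -/
/-- For input x with p_I(x) > 0, rejecting is no worse than the best prediction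
iff r_B(x) + (ε₂-ε₃)·(π/(1-π))·(p_O(x)/p_I(x)) ≥ ε₁. -/
theorem reject_iff_score_ge {X Y : Type*} [Fintype X] [Fintype Y] [Nonempty Y]
    (pI : X → Y → ℝ) (pO : X → ℝ) (π : ℝ) (ℓ : Y → Y → ℝ)
    (ε1 ε2 ε3 : ℝ) (hε : ε3 < ε2) (hπ0 : 0 < π) (hπ1 : π < 1)
    (x : X) (pIx : ℝ) (hpIx : pIx = ∑ y : Y, pI x y) (hpos : 0 < pIx)
    (rB : ℝ)
    (hrB : rB = Finset.univ.inf' Finset.univ_nonempty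
      (fun yh : Y => ∑ y : Y, (pI x y / pIx) * ℓ y yh)) :
    (∀ yh : Y,
        π * pO x * ε3 + (1 - π) * (∑ y : Y, pI x y) * ε1 ≤
          π * pO x * ε2 + (1 - π) * ∑ y : Y, pI x y * ℓ y yh) ↔
      ε1 ≤ rB + (ε2 - ε3) * (π / (1 - π)) * (pO x / pIx) := by
  have h1π : (0:ℝ) < 1 - π := by linarith
  have hne : pIx ≠ 0 := ne_of_gt hpos
  set c : ℝ := (ε2 - ε3) * (π / (1 - π)) * (pO x / pIx) with hc
  rw [← hpIx]
  have key : ∀ yh : Y,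
      (π * pO x * ε3 + (1 - π) * pIx * ε1 ≤
        π * pO x * ε2 + (1 - π) * ∑ y : Y, pI x y * ℓ y yh)
      ↔ ε1 ≤ c + ∑ y : Y, (pI x y / pIx) * ℓ y yh := by
    intro yh
    have hsum : ∑ y : Y, (pI x y / pIx) * ℓ y yh = (∑ y : Y, pI x y * ℓ y yh) / pIx := by
      rw [Finset.sum_div]
      exact Finset.sum_congr rfl fun y _ => by ring
    rw [hsum]
    have hmul : ((1 - π) * pIx) * (c + (∑ y : Y, pI x y * ℓ y yh) / pIx)
        = π * pO x * (ε2 - ε3) + (1 - π) * ∑ y : Y, pI x y * ℓ y yh := by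
      rw [hc]; field_simp
    constructor
    · intro h
      rw [← mul_le_mul_iff_right₀ (mul_pos h1π hpos), hmul]
      linarith
    · intro h
      rw [← mul_le_mul_iff_right₀ (mul_pos h1π hpos), hmul] at h
      linarith
  constructor
  · intro h
    rw [hrB]
    have hinf : ε1 - c ≤ Finset.univ.inf' Finset.univ_nonempty
        (fun yh : Y => ∑ y : Y, (pI x y / pIx) * ℓ y yh) := by
      rw [Finset.le_inf'_iff]
      intro yh _
      have := (key yh).mp (h yh)
      linarith
    linarith
  · intro h yh
    apply (key yh).mpr
    have hle : rB ≤ ∑ y : Y, (pI x y / pIx) * ℓ y yh := by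
      rw [hrB]
      exact Finset.inf'_le _ (Finset.mem_univ yh)
    linarith
end

section
/- The deterministic selective classifier consisting of the Bayes ID classifier h_B together with the selective function c(x) = 1 if s_C(x) ≤ ε₁ and c(x) = 0 otherwise, where s_C(x) = r_B(x) + (ε₂−ε₃)·(π/(1−π))·(p_O(x)/p_I(x)), minimizes the expected risk R(h,c) = Σ_{x,ȳ} p(x,ȳ)·𝔼[ℓ̄(ȳ,(h,c)(x))] over all pairs (h,c) of classifiers h : X → Y and selective functions c : X → [0,1]. -/
/-- The Bayes ID classifier together with the selective function thresholding
s_C(x) = r_B(x) + (ε₂-ε₃)·(π/(1-π))·(p_O(x)/p_I(x)) at ε₁ minimizes the expected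
risk of the cost-based OOD model. -/
theorem cost_based_optimal {X Y : Type*} [Fintype X] [Fintype Y]
    (pI : X → Y → ℝ) (pO : X → ℝ) (π : ℝ) (ℓ : Y → Y → ℝ)
    (ε1 ε2 ε3 : ℝ) (hε : ε3 < ε2) (hπ0 : 0 < π) (hπ1 : π < 1)
    (hpI : ∀ x, 0 < ∑ y : Y, pI x y)
    (R : (X → Y) → (X → ℝ) → ℝ)
    (hR : ∀ h c, R h c = ∑ x : X,
      (π * pO x * (c x * ε2 + (1 - c x) * ε3) +
        (1 - π) * ∑ y : Y, pI x y * (c x * ℓ y (h x) + (1 - c x) * ε1)))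
    (hB : X → Y)
    (hhB : ∀ x (yh : Y),
      (∑ y : Y, (pI x y / ∑ y' : Y, pI x y') * ℓ y (hB x)) ≤
        ∑ y : Y, (pI x y / ∑ y' : Y, pI x y') * ℓ y yh)
    (rB : X → ℝ)
    (hrB : ∀ x, rB x = ∑ y : Y, (pI x y / ∑ y' : Y, pI x y') * ℓ y (hB x))
    (sC : X → ℝ)
    (hsC : ∀ x, sC x = rB x + (ε2 - ε3) * (π / (1 - π)) * (pO x / ∑ y : Y, pI x y))
    (cC : X → ℝ) (hcC : ∀ x, cC x = if sC x ≤ ε1 then 1 else 0) :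
    ∀ (h : X → Y) (c : X → ℝ), (∀ x, 0 ≤ c x ∧ c x ≤ 1) → R hB cC ≤ R h c := by
  intro h c hc
  rw [hR, hR]
  apply Finset.sum_le_sum
  intro x _
  set S : ℝ := ∑ y : Y, pI x y with hSdef
  have hS : 0 < S := hpI x
  set AB : ℝ := ∑ y : Y, pI x y * ℓ y (hB x) with hABdef
  set Ah : ℝ := ∑ y : Y, pI x y * ℓ y (h x) with hAhdef
  have hdivB : (∑ y : Y, (pI x y / S) * ℓ y (hB x)) = AB / S := by
    rw [hABdef, Finset.sum_div]
    exact Finset.sum_congr rfl fun y _ => by ring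
  have hdivh : (∑ y : Y, (pI x y / S) * ℓ y (h x)) = Ah / S := by
    rw [hAhdef, Finset.sum_div]
    exact Finset.sum_congr rfl fun y _ => by ring
  have hAB : AB ≤ Ah := by
    have := hhB x (h x)
    rw [hdivB, hdivh] at this
    exact (div_le_div_iff_of_pos_right hS).mp this
  have hrB' : rB x = AB / S := by rw [hrB, hdivB]
  have hπ' : (0:ℝ) < 1 - π := by linarith
  have hid : π * pO x * (ε2 - ε3) + (1 - π) * (AB - ε1 * S)
      = ((1 - π) * S) * (sC x - ε1) := by
    rw [hsC, hrB', ← hSdef]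
    field_simp
    ring
  have expand : ∀ (t : ℝ) (g : Y → ℝ),
      (∑ y : Y, pI x y * (t * g y + (1 - t) * ε1))
        = t * (∑ y : Y, pI x y * g y) + (1 - t) * ε1 * S := by
    intro t g
    rw [show (∑ y : Y, pI x y * (t * g y + (1 - t) * ε1))
        = ∑ y : Y, (t * (pI x y * g y) + ((1 - t) * ε1) * pI x y) from
        Finset.sum_congr rfl fun y _ => by ring,
      Finset.sum_add_distrib, ← Finset.mul_sum, ← Finset.mul_sum]
  rw [expand (cC x) (fun y => ℓ y (hB x)), expand (c x) (fun y => ℓ y (h x))]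
  obtain ⟨hc0, hc1⟩ := hc x
  by_cases hcase : sC x ≤ ε1
  · have hcc : cC x = 1 := by rw [hcC, if_pos hcase]
    have hGB : π * pO x * (ε2 - ε3) + (1 - π) * (AB - ε1 * S) ≤ 0 := by
      rw [hid]
      exact mul_nonpos_of_nonneg_of_nonpos (le_of_lt (mul_pos hπ' hS))
        (by linarith)
    have P1 : 0 ≤ (1 - c x) * (-(π * pO x * (ε2 - ε3) + (1 - π) * (AB - ε1 * S))) :=
      mul_nonneg (by linarith) (by linarith)
    have P2 : 0 ≤ c x * ((1 - π) * (Ah - AB)) :=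
      mul_nonneg hc0 (mul_nonneg (le_of_lt hπ') (by linarith))
    rw [hcc]
    nlinarith [P1, P2]
  · have hcc : cC x = 0 := by rw [hcC, if_neg hcase]
    have hGB : 0 < π * pO x * (ε2 - ε3) + (1 - π) * (AB - ε1 * S) := by
      rw [hid]
      exact mul_pos (mul_pos hπ' hS) (by linarith [not_le.1 hcase])
    have P : 0 ≤ c x * (π * pO x * (ε2 - ε3) + (1 - π) * (Ah - ε1 * S)) := by
      apply mul_nonneg hc0
      nlinarith
    rw [hcc]
    nlinarith [P]
end

section
/- Suppose (h,c) is optimal for the bounded TPR-FPR problem (minimize selective risk subject to φ(c) ≥ φ_min and ρ(c) ≤ ρ_max), and x₁, x₂ ∈ X satisfy p_I(x₁) > 0, p_I(x₂) > 0, r(x₁) > r(x₂), and p_O(x₁)/p_I(x₁) ≥ p_O(x₂)/p_I(x₂). Then c(x₁) = 0 or c(x₂) = 1. -/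
lemma sum_shift {X : Type*} [Fintype X] [DecidableEq X] (f c : X → ℝ) (x1 x2 : X)
    (hne : x1 ≠ x2) (a b : ℝ) :
    (∑ x : X, f x * (c x + (if x = x2 then b else 0) - (if x = x1 then a else 0)))
      = (∑ x : X, f x * c x) + f x2 * b - f x1 * a := by
  simp only [mul_sub, mul_add, Finset.sum_sub_distrib, Finset.sum_add_distrib,
    mul_ite, mul_zero, Finset.sum_ite_eq', Finset.mem_univ, if_true]

/-- Claim 1 in the proof of Theorem 3: at an optimal solution of the bounded
TPR-FPR problem, if r(x₁) > r(x₂) and p_O(x₁)/p_I(x₁) ≥ p_O(x₂)/p_I(x₂),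
then c(x₁) = 0 or c(x₂) = 1. -/
theorem tpr_fpr_opt_monotone {X Y : Type*} [Fintype X] [Fintype Y]
    (pI : X → Y → ℝ) (pO : X → ℝ) (ℓ : Y → Y → ℝ) (h : X → Y)
    (φmin ρmax : ℝ)
    (pIm : X → ℝ) (hpIm : ∀ x, pIm x = ∑ y : Y, pI x y)
    (R : X → ℝ) (hRdef : ∀ x, R x = ∑ y : Y, pI x y * ℓ y (h x))
    (r : X → ℝ) (hr : ∀ x, r x = R x / pIm x)
    (feasible : (X → ℝ) → Prop)
    (hfeas : ∀ c, feasible c ↔ (∀ x, 0 ≤ c x ∧ c x ≤ 1) ∧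
      0 < (∑ x : X, pIm x * c x) ∧
      φmin ≤ (∑ x : X, pIm x * c x) ∧
      (∑ x : X, pO x * c x) ≤ ρmax)
    (c : X → ℝ) (hc : feasible c)
    (hopt : ∀ c', feasible c' →
      (∑ x : X, R x * c x) / (∑ x : X, pIm x * c x) ≤
        (∑ x : X, R x * c' x) / (∑ x : X, pIm x * c' x))
    (x1 x2 : X) (hp1 : 0 < pIm x1) (hp2 : 0 < pIm x2)
    (hr12 : r x2 < r x1)
    (hratio : pO x2 / pIm x2 ≤ pO x1 / pIm x1) :
    c x1 = 0 ∨ c x2 = 1 := by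
  classical
  by_contra hcon
  push_neg at hcon
  obtain ⟨h1, h2⟩ := hcon
  rw [hfeas] at hc
  obtain ⟨hbd, hφpos, hφmin, hρ⟩ := hc
  have hc1 : 0 < c x1 := lt_of_le_of_ne (hbd x1).1 (Ne.symm h1)
  have hc2 : c x2 < 1 := lt_of_le_of_ne (hbd x2).2 h2
  have hne : x1 ≠ x2 := by
    intro hx; rw [hx] at hr12; exact lt_irrefl _ hr12
  set ε : ℝ := min (pIm x1 * c x1) (pIm x2 * (1 - c x2)) with hε
  have hεpos : 0 < ε := lt_min (mul_pos hp1 hc1) (mul_pos hp2 (by linarith))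
  set c' : X → ℝ := fun x => c x + (if x = x2 then ε / pIm x2 else 0)
      - (if x = x1 then ε / pIm x1 else 0) with hc'
  have key : ∀ f : X → ℝ, (∑ x : X, f x * c' x)
      = (∑ x : X, f x * c x) + f x2 * (ε / pIm x2) - f x1 * (ε / pIm x1) := by
    intro f
    exact sum_shift f c x1 x2 hne _ _
  have hφ' : (∑ x : X, pIm x * c' x) = ∑ x : X, pIm x * c x := by
    rw [key]
    field_simp
    ring
  have hb1 : ε / pIm x1 ≤ c x1 := by
    rw [div_le_iff₀ hp1, mul_comm]
    exact min_le_left _ _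
  have hb2 : ε / pIm x2 ≤ 1 - c x2 := by
    rw [div_le_iff₀ hp2, mul_comm]
    exact min_le_right _ _
  have hd1 : 0 < ε / pIm x1 := div_pos hεpos hp1
  have hd2 : 0 < ε / pIm x2 := div_pos hεpos hp2
  have hbd' : ∀ x, 0 ≤ c' x ∧ c' x ≤ 1 := by
    intro x
    simp only [hc']
    by_cases hx1 : x = x1
    · rw [hx1, if_neg hne, if_pos rfl]
      constructor
      · linarith
      · linarith [(hbd x1).2]
    · by_cases hx2 : x = x2
      · rw [hx2, if_pos rfl, if_neg (hx2 ▸ hx1)]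
        constructor
        · linarith [(hbd x2).1]
        · linarith
      · rw [if_neg hx2, if_neg hx1]
        simpa using hbd x
  have hρ' : (∑ x : X, pO x * c' x) ≤ ρmax := by
    rw [key]
    have : pO x2 * (ε / pIm x2) - pO x1 * (ε / pIm x1) ≤ 0 := by
      have e1 : pO x2 * (ε / pIm x2) = (pO x2 / pIm x2) * ε := by ring
      have e2 : pO x1 * (ε / pIm x1) = (pO x1 / pIm x1) * ε := by ring
      rw [e1, e2]
      nlinarith
    linarith
  have hfeas' : feasible c' := by
    rw [hfeas]
    refine ⟨hbd', ?_, ?_, hρ'⟩ <;> rw [hφ']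
    · exact hφpos
    · exact hφmin
  have hRlt : (∑ x : X, R x * c' x) < ∑ x : X, R x * c x := by
    rw [key]
    have e1 : R x2 * (ε / pIm x2) = r x2 * ε := by
      rw [hr]; ring
    have e2 : R x1 * (ε / pIm x1) = r x1 * ε := by
      rw [hr]; ring
    rw [e1, e2]
    nlinarith
  have hle := hopt c' hfeas'
  rw [hφ'] at hle
  have hle2 : (∑ x : X, R x * c x) ≤ ∑ x : X, R x * c' x :=
    (div_le_div_iff_of_pos_right hφpos).mp hle
  linarith
end

section
/- Suppose for all x ∈ X the identity R(x) + μ·p_O(x) = λ·p_I(x) holds for some real constants μ, λ. Then for every selective function c with φ(c) > 0, the selective risk satisfies R^S(h,c) = λ − μ·ρ(c)/φ(c). Consequently, if μ < 0, minimizing R^S(h,c) subject to φ(c) ≥ φ_min and ρ(c) ≤ ρ_max is equivalent to minimizing the ratio ρ(c)/φ(c) subject to the same constraints; if μ > 0, it is equivalent to maximizing ρ(c)/φ(c). -/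
open Finset

section AffineReparametrization

variable {α 𝕜 : Type*} [Field 𝕜] [LinearOrder 𝕜] [IsStrictOrderedRing 𝕜]
  {f g : α → 𝕜} {s : Set α} {a : α} {lam μ : 𝕜}

theorem isMinOn_iff_isMinOn_of_eqOn_sub_mul_of_neg (hμ : μ < 0)
    (hfg : Set.EqOn f (fun b => lam - μ * g b) s) (ha : a ∈ s) :
    IsMinOn f s a ↔ IsMinOn g s a := by
  simp only [isMinOn_iff]
  refine forall₂_congr fun b hb => ?_
  rw [hfg ha, hfg hb, sub_le_sub_iff_left, mul_le_mul_left_of_neg hμ]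

theorem isMinOn_iff_isMaxOn_of_eqOn_sub_mul_of_pos (hμ : 0 < μ)
    (hfg : Set.EqOn f (fun b => lam - μ * g b) s) (ha : a ∈ s) :
    IsMinOn f s a ↔ IsMaxOn g s a := by
  simp only [isMinOn_iff, isMaxOn_iff]
  refine forall₂_congr fun b hb => ?_
  rw [hfg ha, hfg hb, sub_le_sub_iff_left, mul_le_mul_iff_right₀ hμ]

end AffineReparametrization

theorem sum_mul_eq_sub_of_add_mul_eq_mul {ι R : Type*} [CommRing R] (s : Finset ι)
    {r p q c : ι → R} {μ lam : R} (hid : ∀ x, r x + μ * q x = lam * p x) :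
    ∑ x ∈ s, r x * c x = lam * ∑ x ∈ s, p x * c x - μ * ∑ x ∈ s, q x * c x := by
  rw [mul_sum, mul_sum, ← sum_sub_distrib]
  exact sum_congr rfl fun x _ => by linear_combination c x * hid x

theorem sum_mul_div_eq_sub_mul_div_of_add_mul_eq_mul {ι K : Type*} [Field K] (s : Finset ι)
    {r p q c : ι → K} {μ lam : K} (hid : ∀ x, r x + μ * q x = lam * p x)
    (hp : ∑ x ∈ s, p x * c x ≠ 0) :
    (∑ x ∈ s, r x * c x) / ∑ x ∈ s, p x * c x =
      lam - μ * ((∑ x ∈ s, q x * c x) / ∑ x ∈ s, p x * c x) := by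
  rw [sum_mul_eq_sub_of_add_mul_eq_mul s hid]
  field_simp

theorem selective_risk_linear_reduction_general {X : Type*} [Fintype X]
    (pI pO R : X → ℝ)
    (μ lam φmin ρmax : ℝ) (hφmin : 0 < φmin)
    (hid : ∀ x, R x + μ * pO x = lam * pI x)
    (φ ρ : (X → ℝ) → ℝ)
    (hφ : ∀ c, φ c = ∑ x : X, pI x * c x)
    (hρ : ∀ c, ρ c = ∑ x : X, pO x * c x)
    (RS : (X → ℝ) → ℝ)
    (hRS : ∀ c, RS c = (∑ x : X, R x * c x) / φ c)
    (feasible : (X → ℝ) → Prop)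
    (hfeas : ∀ c, feasible c ↔ (∀ x, 0 ≤ c x ∧ c x ≤ 1) ∧
      φmin ≤ φ c ∧ ρ c ≤ ρmax) :
    (∀ c, feasible c → RS c = lam - μ * (ρ c / φ c)) ∧
    (μ < 0 → ∀ c, feasible c →
      ((∀ c', feasible c' → RS c ≤ RS c') ↔
        (∀ c', feasible c' → ρ c / φ c ≤ ρ c' / φ c'))) ∧
    (0 < μ → ∀ c, feasible c →
      ((∀ c', feasible c' → RS c ≤ RS c') ↔
        (∀ c', feasible c' → ρ c' / φ c' ≤ ρ c / φ c))) := by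
  have key : ∀ c, feasible c → RS c = lam - μ * (ρ c / φ c) := fun c hc => by
    have hφc : φ c ≠ 0 := (hφmin.trans_le ((hfeas c).1 hc).2.1).ne'
    rw [hφ] at hφc
    rw [hRS, hφ, hρ, sum_mul_div_eq_sub_mul_div_of_add_mul_eq_mul univ hid hφc]
  refine ⟨key, fun hμ c hc => ?_, fun hμ c hc => ?_⟩
  · exact isMinOn_iff_isMinOn_of_eqOn_sub_mul_of_neg hμ (s := {c | feasible c}) key hc
  · exact isMinOn_iff_isMaxOn_of_eqOn_sub_mul_of_pos hμ (s := {c | feasible c}) key hc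

/-- If R(x) + μ·p_O(x) = λ·p_I(x) for all x, then R^S(h,c) = λ − μ·ρ(c)/φ(c);
consequently the bounded TPR-FPR problem reduces to minimizing (μ < 0) or
maximizing (μ > 0) the ratio ρ(c)/φ(c). -/
theorem selective_risk_linear_reduction {X : Type*} [Fintype X]
    (pI pO R : X → ℝ) (hR : ∀ x, 0 ≤ R x)
    (μ lam φmin ρmax : ℝ) (hφmin : 0 < φmin)
    (hid : ∀ x, R x + μ * pO x = lam * pI x)
    (φ ρ : (X → ℝ) → ℝ)
    (hφ : ∀ c, φ c = ∑ x : X, pI x * c x)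
    (hρ : ∀ c, ρ c = ∑ x : X, pO x * c x)
    (RS : (X → ℝ) → ℝ)
    (hRS : ∀ c, RS c = (∑ x : X, R x * c x) / φ c)
    (feasible : (X → ℝ) → Prop)
    (hfeas : ∀ c, feasible c ↔ (∀ x, 0 ≤ c x ∧ c x ≤ 1) ∧
      φmin ≤ φ c ∧ ρ c ≤ ρmax) :
    (∀ c, feasible c → RS c = lam - μ * (ρ c / φ c)) ∧
    (μ < 0 → ∀ c, feasible c →
      ((∀ c', feasible c' → RS c ≤ RS c') ↔
        (∀ c', feasible c' → ρ c / φ c ≤ ρ c' / φ c'))) ∧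
    (0 < μ → ∀ c, feasible c →
      ((∀ c', feasible c' → RS c ≤ RS c') ↔
        (∀ c', feasible c' → ρ c' / φ c' ≤ ρ c / φ c))) :=
  selective_risk_linear_reduction_general pI pO R μ lam φmin ρmax hφmin hid φ ρ hφ hρ RS hRS
    feasible hfeas
end

section
/- Suppose x₁, x₂ ∈ X with p_I(x₁) > 0, p_I(x₂) > 0, and c is feasible for the bounded TPR-FPR problem with c(x₁) > 0 and c(x₂) < 1. Define c' equal to c except c'(x₁) = c(x₁) − Δ and c'(x₂) = c(x₂) + (p_I(x₁)/p_I(x₂))·Δ, where Δ = min{c(x₁), (p_I(x₂)/p_I(x₁))·(1 − c(x₂))} > 0. Then φ(c') = φ(c); moreover, if p_O(x₁)/p_I(x₁) ≥ p_O(x₂)/p_I(x₂) then ρ(c') ≤ ρ(c), and if r(x₁) > r(x₂) then Σ_x R(x)c'(x) < Σ_x R(x)c(x). -/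
/-- The two-point perturbation of Claim 1: shifting mass Δ from x₁ to x₂ keeps c' in
[0,1], preserves the TPR, does not increase the FPR when p_O(x₁)/p_I(x₁) ≥
p_O(x₂)/p_I(x₂), and strictly decreases the risk sum when r(x₁) > r(x₂). -/
theorem two_point_perturbation {X : Type*} [Fintype X] [DecidableEq X]
    (pI pO R r : X → ℝ) (hRr : ∀ x, R x = pI x * r x) (hr0 : ∀ x, 0 ≤ r x)
    (φmin ρmax : ℝ)
    (c : X → ℝ) (hc : ∀ x, 0 ≤ c x ∧ c x ≤ 1)
    (hcφ : φmin ≤ ∑ x : X, pI x * c x)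
    (hcρ : (∑ x : X, pO x * c x) ≤ ρmax)
    (x1 x2 : X) (hne : x1 ≠ x2) (hp1 : 0 < pI x1) (hp2 : 0 < pI x2)
    (hc1 : 0 < c x1) (hc2 : c x2 < 1)
    (Δ : ℝ) (hΔ : Δ = min (c x1) (pI x2 / pI x1 * (1 - c x2)))
    (c' : X → ℝ)
    (hc' : c' = Function.update
      (Function.update c x1 (c x1 - Δ)) x2 (c x2 + pI x1 / pI x2 * Δ)) :
    0 < Δ ∧ (∀ x, 0 ≤ c' x ∧ c' x ≤ 1) ∧
    (∑ x : X, pI x * c' x) = (∑ x : X, pI x * c x) ∧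
    (pO x2 / pI x2 ≤ pO x1 / pI x1 →
      (∑ x : X, pO x * c' x) ≤ ∑ x : X, pO x * c x) ∧
    (r x2 < r x1 →
      (∑ x : X, R x * c' x) < ∑ x : X, R x * c x) := by
  have hΔpos : 0 < Δ := by
    rw [hΔ]
    exact lt_min hc1 (mul_pos (div_pos hp2 hp1) (by linarith))
  have hΔc1 : Δ ≤ c x1 := hΔ ▸ min_le_left _ _
  have hΔc2 : Δ ≤ pI x2 / pI x1 * (1 - c x2) := hΔ ▸ min_le_right _ _
  have hc'1 : c' x1 = c x1 - Δ := by
    rw [hc', Function.update_of_ne hne, Function.update_self]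
  have hc'2 : c' x2 = c x2 + pI x1 / pI x2 * Δ := by
    rw [hc', Function.update_self]
  have hc'o : ∀ x, x ≠ x1 → x ≠ x2 → c' x = c x := by
    intro x h1 h2
    rw [hc', Function.update_of_ne h2, Function.update_of_ne h1]
  have hub2 : pI x1 / pI x2 * Δ ≤ 1 - c x2 := by
    rw [div_mul_eq_mul_div, div_le_iff₀ hp2]
    calc pI x1 * Δ ≤ pI x1 * (pI x2 / pI x1 * (1 - c x2)) := by
          exact mul_le_mul_of_nonneg_left hΔc2 hp1.le
      _ = (1 - c x2) * pI x2 := by field_simp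
  have key : ∀ g : X → ℝ, (∑ x : X, g x * c' x)
      = (∑ x : X, g x * c x) + Δ * (pI x1 / pI x2 * g x2 - g x1) := by
    intro g
    have h : ∀ x : X, g x * c' x = g x * c x
        + ((if x = x1 then -(g x1) * Δ else 0)
          + (if x = x2 then g x2 * (pI x1 / pI x2 * Δ) else 0)) := by
      intro x
      by_cases h1 : x = x1
      · subst h1
        simp [hc'1, hne]
        ring
      · by_cases h2 : x = x2
        · subst h2
          simp [hc'2, h1]
          ring
        · simp [hc'o x h1 h2, h1, h2]
    simp_rw [h, Finset.sum_add_distrib, Finset.sum_ite_eq', Finset.mem_univ,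
      if_true]
    ring
  refine ⟨hΔpos, ?_, ?_, ?_, ?_⟩
  · intro x
    by_cases h1 : x = x1
    · rw [h1, hc'1]
      constructor
      · linarith
      · linarith [(hc x1).2]
    · by_cases h2 : x = x2
      · rw [h2, hc'2]
        have : 0 ≤ pI x1 / pI x2 * Δ := by positivity
        constructor
        · linarith [(hc x2).1]
        · linarith
      · rw [hc'o x h1 h2]; exact hc x
  · rw [key pI]
    have : pI x1 / pI x2 * pI x2 - pI x1 = 0 := by field_simp; ring
    rw [this, mul_zero, add_zero]
  · intro hratio
    rw [key pO]
    have : pI x1 / pI x2 * pO x2 - pO x1 ≤ 0 := by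
      have h1 : pO x2 / pI x2 * pI x1 ≤ pO x1 / pI x1 * pI x1 :=
        mul_le_mul_of_nonneg_right hratio hp1.le
      have h2 : pO x1 / pI x1 * pI x1 = pO x1 := by field_simp
      have h3 : pO x2 / pI x2 * pI x1 = pI x1 / pI x2 * pO x2 := by ring
      linarith
    nlinarith
  · intro hr
    rw [key R]
    have : pI x1 / pI x2 * R x2 - R x1 = pI x1 * (r x2 - r x1) := by
      rw [hRr, hRr]; field_simp
    rw [this]
    nlinarith [mul_pos hΔpos (mul_pos hp1 (sub_pos.2 hr))]
end

section
/- Let x₁,x₂,x₃ ∈ X with positive p_I, and write p_i = p_I(x_i), q_i = p_O(x_i), R_i = R(x_i), and P_i = (q_i/p_i, R_i/p_i). Suppose β·P₃ = α₁·P₁ + α₂·P₂ with α₁,α₂,β ≥ 0, α₁+α₂ = 1. Define c' equal to c except c'(x₁) = c(x₁) + Δ·α₁·p₃/p₁, c'(x₂) = c(x₂) + Δ·α₂·p₃/p₂, c'(x₃) = c(x₃) − Δ, for any Δ with 0 < Δ ≤ min{c(x₃), (p₁/(α₁p₃))(1−c(x₁)), (p₂/(α₂p₃))(1−c(x₂))}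 (interpreting bounds with α_i = 0 as +∞). Then φ(c') = φ(c), ρ(c') − ρ(c) = Δ·(β−1)·q₃, and Σ_x R(x)c'(x) − Σ_x R(x)c(x) = Δ·(β−1)·R₃. -/
/-- The three-point perturbation of Claim 2: shifting mass Δ from x₃ to x₁ and x₂
according to the convex combination β·P₃ = α₁·P₁ + α₂·P₂ preserves the TPR and
changes the FPR by Δ(β−1)q₃ and the risk sum by Δ(β−1)R₃. -/
theorem three_point_perturbation {X : Type*} [Fintype X] [DecidableEq X]
    (pI pO R : X → ℝ)
    (c : X → ℝ) (hc : ∀ x, 0 ≤ c x ∧ c x ≤ 1)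
    (x1 x2 x3 : X) (h12 : x1 ≠ x2) (h13 : x1 ≠ x3) (h23 : x2 ≠ x3)
    (hp1 : 0 < pI x1) (hp2 : 0 < pI x2) (hp3 : 0 < pI x3)
    (α1 α2 β : ℝ) (hα1 : 0 ≤ α1) (hα2 : 0 ≤ α2) (hβ : 0 ≤ β) (hs : α1 + α2 = 1)
    (hcomb : β • ((pO x3 / pI x3, R x3 / pI x3) : ℝ × ℝ) =
      α1 • ((pO x1 / pI x1, R x1 / pI x1) : ℝ × ℝ) +
        α2 • ((pO x2 / pI x2, R x2 / pI x2) : ℝ × ℝ))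
    (Δ : ℝ) (hΔ0 : 0 < Δ) (hΔ3 : Δ ≤ c x3)
    (hΔ1 : 0 < α1 → Δ ≤ pI x1 / (α1 * pI x3) * (1 - c x1))
    (hΔ2 : 0 < α2 → Δ ≤ pI x2 / (α2 * pI x3) * (1 - c x2))
    (c' : X → ℝ)
    (hc' : c' = Function.update (Function.update (Function.update c
      x1 (c x1 + Δ * α1 * pI x3 / pI x1))
      x2 (c x2 + Δ * α2 * pI x3 / pI x2))
      x3 (c x3 - Δ)) :
    (∑ x : X, pI x * c' x) = (∑ x : X, pI x * c x) ∧
    (∑ x : X, pO x * c' x) - (∑ x : X, pO x * c x) = Δ * (β - 1) * pO x3 ∧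
    (∑ x : X, R x * c' x) - (∑ x : X, R x * c x) = Δ * (β - 1) * R x3 := by
  have hq : β * (pO x3 / pI x3) = α1 * (pO x1 / pI x1) + α2 * (pO x2 / pI x2) := by
    have := congrArg Prod.fst hcomb; simpa using this
  have hR : β * (R x3 / pI x3) = α1 * (R x1 / pI x1) + α2 * (R x2 / pI x2) := by
    have := congrArg Prod.snd hcomb; simpa using this
  have hd1 : c' x1 - c x1 = Δ * α1 * pI x3 / pI x1 := by
    simp [hc', Function.update_apply, h12, h13]
  have hd2 : c' x2 - c x2 = Δ * α2 * pI x3 / pI x2 := by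
    simp [hc', Function.update_apply, h23]
  have hd3 : c' x3 - c x3 = -Δ := by
    simp [hc', Function.update_apply]
  have hd0 : ∀ x, x ≠ x1 → x ≠ x2 → x ≠ x3 → c' x - c x = 0 := by
    intro x hx1 hx2 hx3
    simp [hc', Function.update_apply, hx1, hx2, hx3]
  have key : ∀ f : X → ℝ, (∑ x : X, f x * c' x) - (∑ x : X, f x * c x) =
      f x1 * (Δ * α1 * pI x3 / pI x1) + f x2 * (Δ * α2 * pI x3 / pI x2) - f x3 * Δ := by
    intro f
    have h1 : (∑ x : X, f x * c' x) - (∑ x : X, f x * c x)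
        = ∑ x : X, f x * (c' x - c x) := by
      rw [← Finset.sum_sub_distrib]; congr 1; ext x; ring
    rw [h1]
    have hsub : ∑ x : X, f x * (c' x - c x)
        = ∑ x ∈ ({x1, x2, x3} : Finset X), f x * (c' x - c x) := by
      symm
      apply Finset.sum_subset (Finset.subset_univ _)
      intro x _ hx
      simp only [Finset.mem_insert, Finset.mem_singleton, not_or] at hx
      rw [hd0 x hx.1 hx.2.1 hx.2.2, mul_zero]
    rw [hsub]
    rw [Finset.sum_insert (by simp [h12, h13]), Finset.sum_insert (by simp [h23]),
      Finset.sum_singleton, hd1, hd2, hd3]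
    ring
  refine ⟨?_, ?_, ?_⟩
  · have := key pI
    have h : pI x1 * (Δ * α1 * pI x3 / pI x1) + pI x2 * (Δ * α2 * pI x3 / pI x2) - pI x3 * Δ = 0 := by
      field_simp
      linear_combination Δ * pI x3 * hs
    linarith [key pI]
  · rw [key pO]
    field_simp at hq ⊢
    linear_combination (-1 : ℝ) * hq
  · rw [key R]
    field_simp at hR ⊢
    linear_combination (-1 : ℝ) * hR
end
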